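/- arXiv:0907.0798 — 2 statements merged into one kernel-verified Lean document; each statement's English description precedes it below -/
import Mathlib

section
/- Let T : Fin m → Fin m → ℝ be symmetric with trace zero and let σ_{m-1} denote the volume of the unit sphere in ℝ^m. Then ∫_{S_r^{m-1}} ∑_{i,j,k,l} T_{ij} T_{kl} y_i y_j y_k y_l dσ_r(y) = (2 σ_{m-1} / ((m+2)m)) r^{m+3} ∑_{i,j} T_{ij}². -/
/-!
For a finite measure on the unit sphere invariant under the orthogonal group, the fourth moments
are `∫ yᵢ yⱼ yₖ yₗ = σ / ((m + 2) m) · (δᵢⱼ δₖₗ + δᵢₖ δⱼₗ + δᵢₗ δⱼₖ)` with `σ` the total mass: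
flipping the sign of one coordinate kills every moment in which some index occurs once, swapping
coordinates together with `∑ yₖ² = 1` gives `∫ yᵢ² = σ / m`, and a reflection mixing two
coordinates gives `∫ yᵢ⁴ = 3 ∫ yᵢ² yⱼ²`. Contracting with `Tᵢⱼ Tₖₗ`, the trace condition kills the
first term and symmetry turns each of the other two into `∑ Tᵢⱼ²`.

The `(m - 1)`-dimensional Hausdorff measure on the unit sphere is such a measure; it is finite
because the sphere is the radial projection of the `2m` faces of a cube, each a Lipschitz image of
an `(m - 1)`-cube. Passing to the sphere of radius `r` costs `r ^ (m - 1)` for the measure and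
`r ^ 4` for the integrand.
-/

open MeasureTheory Metric
open scoped NNReal ENNReal

theorem lipschitzOnWith_normalize {E : Type*} [NormedAddCommGroup E] [NormedSpace ℝ E] :
    LipschitzOnWith 2 (NormedSpace.normalize : E → E) {x | 1 ≤ ‖x‖} := by
  refine LipschitzOnWith.of_dist_le_mul fun x (hx : 1 ≤ ‖x‖) y (hy : 1 ≤ ‖y‖) => ?_
  have hx0 : 0 < ‖x‖ := one_pos.trans_le hx
  have hy0 : 0 < ‖y‖ := one_pos.trans_le hy
  have hsplit : NormedSpace.normalize x - NormedSpace.normalize y =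
      ‖x‖⁻¹ • (x - y) + (‖x‖⁻¹ - ‖y‖⁻¹) • y := by
    simp only [NormedSpace.normalize, smul_sub, sub_smul]; abel
  have h₁ : ‖‖x‖⁻¹ • (x - y)‖ ≤ ‖x - y‖ := by
    rw [norm_smul, norm_inv, norm_norm]
    exact mul_le_of_le_one_left (norm_nonneg _) (inv_le_one_of_one_le₀ hx)
  have h₂ : ‖(‖x‖⁻¹ - ‖y‖⁻¹) • y‖ ≤ ‖x - y‖ := by
    have : (‖x‖⁻¹ - ‖y‖⁻¹) * ‖y‖ = (‖y‖ - ‖x‖) / ‖x‖ := by field_simp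
    rw [norm_smul, Real.norm_eq_abs, ← abs_of_pos hy0, ← abs_mul, abs_of_pos hy0, this, abs_div,
      abs_of_pos hx0]
    exact (div_le_self (abs_nonneg _) hx).trans
      ((abs_norm_sub_norm_le y x).trans_eq (norm_sub_rev y x))
  rw [dist_eq_norm, dist_eq_norm, hsplit, NNReal.coe_ofNat, two_mul]
  exact (norm_add_le _ _).trans (add_le_add h₁ h₂)

/-- On `closedBall 0 1` (sup norm), the radial projection of the face `{x | x i = s}` of the cube
`[-1, 1] ^ (n + 1)`. -/
noncomputable def cubeFaceToSphere {n : ℕ} (i : Fin (n + 1)) (s : ℝ) (y : Fin n → ℝ) :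
    EuclideanSpace ℝ (Fin (n + 1)) :=
  NormedSpace.normalize (WithLp.toLp 2 (i.insertNth (α := fun _ => ℝ) s y))

theorem lipschitzWith_cubeFaceToSphere {n : ℕ} (i : Fin (n + 1)) {s : ℝ} (hs : |s| = 1) :
    ∃ K, LipschitzWith K (cubeFaceToSphere i s) := by
  have hinsert : LipschitzWith 1 (i.insertNth (α := fun _ => ℝ) s) :=
    LipschitzWith.of_dist_le_mul fun y z => by simp [Fin.dist_insertNth_insertNth]
  have hembed := (PiLp.lipschitzWith_toLp 2 fun _ : Fin (n + 1) => ℝ).comp hinsert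
  have hmaps : Set.MapsTo (fun y => WithLp.toLp 2 (i.insertNth (α := fun _ => ℝ) s y)) Set.univ
      {x : EuclideanSpace ℝ (Fin (n + 1)) | 1 ≤ ‖x‖} := fun y _ => by
    simpa [hs] using PiLp.norm_apply_le (WithLp.toLp 2 (i.insertNth (α := fun _ => ℝ) s y)) i
  exact ⟨_, lipschitzOnWith_univ.mp (lipschitzOnWith_normalize.comp hembed.lipschitzOnWith hmaps)⟩

theorem sphere_subset_iUnion_image_cubeFaceToSphere (n : ℕ) :
    sphere (0 : EuclideanSpace ℝ (Fin (n + 1))) 1 ⊆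
      ⋃ i, ⋃ s ∈ ({-1, 1} : Set ℝ), cubeFaceToSphere i s '' closedBall 0 1 := by
  intro x hx
  have hx1 : ‖x‖ = 1 := by simpa using hx
  obtain ⟨i, -, hi⟩ := Finset.univ.exists_max_image (fun a => |x a|) Finset.univ_nonempty
  have hxi : 0 < |x i| := by
    by_contra! h
    have : x = 0 := by
      ext a; simpa using (hi a (Finset.mem_univ a)).trans h
    simp [this] at hx1
  simp only [Set.mem_iUnion, Set.mem_image]
  refine ⟨i, x i / |x i|, ?_, fun j => x (i.succAbove j) / |x i|, ?_, ?_⟩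
  · rcases lt_or_gt_of_ne (abs_pos.mp hxi) with h | h <;>
      simp [abs_of_neg, abs_of_pos, h, h.ne, h.ne']
  · rw [mem_closedBall_zero_iff, pi_norm_le_iff_of_nonneg zero_le_one]
    intro j
    rw [Real.norm_eq_abs, abs_div, abs_abs, div_le_one hxi]
    exact hi _ (Finset.mem_univ _)
  · have : i.insertNth (α := fun _ => ℝ) (x i / |x i|) (fun j => x (i.succAbove j) / |x i|) =
        WithLp.ofLp (|x i|⁻¹ • x) := by
      ext a
      induction a using i.succAboveCases <;> simp [div_eq_inv_mul]
    rw [cubeFaceToSphere, this, WithLp.toLp_ofLp,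
      NormedSpace.normalize_smul_of_pos (inv_pos.mpr hxi),
      NormedSpace.normalize_eq_self_of_norm_eq_one hx1]

theorem hausdorffMeasure_sphere_lt_top (n : ℕ) :
    μH[n] (sphere (0 : EuclideanSpace ℝ (Fin (n + 1))) 1) < ∞ := by
  have hface (i : Fin (n + 1)) (s : ℝ) (hs : s ∈ ({-1, 1} : Set ℝ)) :
      μH[n] (cubeFaceToSphere i s '' closedBall 0 1) < ∞ := by
    obtain ⟨K, hK⟩ :=
      lipschitzWith_cubeFaceToSphere i (s := s) (by rcases hs with rfl | rfl <;> simp)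
    refine (hK.hausdorffMeasure_image_le n.cast_nonneg _).trans_lt
      (ENNReal.mul_lt_top (by simp) ?_)
    have hvol : (μH[n] : Measure (Fin n → ℝ)) = volume := by
      simpa using hausdorffMeasure_pi_real (ι := Fin n)
    rw [hvol]
    exact (isCompact_closedBall _ _).measure_lt_top
  refine (measure_mono (sphere_subset_iUnion_image_cubeFaceToSphere n)).trans_lt ?_
  refine (measure_iUnion_fintype_le _ _).trans_lt (ENNReal.sum_lt_top.mpr fun i _ => ?_)
  exact measure_biUnion_lt_top (by simp) (hface i)

theorem map_smul_hausdorffMeasure {E : Type*} [NormedAddCommGroup E] [NormedSpace ℝ E]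
    [MeasurableSpace E] [BorelSpace E] {d : ℝ} (hd : 0 ≤ d) {c : ℝ} (hc : c ≠ 0) :
    Measure.map (c • ·) (μH[d] : Measure E) = (‖c‖₊⁻¹ ^ d : ℝ≥0) • μH[d] := by
  ext s hs
  rw [Measure.map_apply (measurable_const_smul c) hs, Set.preimage_smul₀ hc,
    Measure.hausdorffMeasure_smul₀ hd (inv_ne_zero hc), nnnorm_inv, Measure.smul_apply]

theorem setIntegral_sphere_hausdorffMeasure {E : Type*} [NormedAddCommGroup E]
    [NormedSpace ℝ E] [MeasurableSpace E] [BorelSpace E] {d : ℝ} (hd : 0 ≤ d) {r : ℝ}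
    (hr : 0 < r) (f : E → ℝ) :
    ∫ y in sphere 0 r, f y ∂μH[d] = r ^ d * ∫ y in sphere 0 1, f (r • y) ∂μH[d] := by
  have hemb : MeasurableEmbedding (r • · : E → E) :=
    (Homeomorph.smulOfNeZero r hr.ne').measurableEmbedding
  have hpre : (r • · : E → E) ⁻¹' sphere 0 r = sphere 0 1 := by
    ext y; simp [norm_smul, abs_of_pos hr, hr.ne']
  rw [← hemb.integral_map, ← hpre, ← hemb.restrict_map, map_smul_hausdorffMeasure hd hr.ne',
    Measure.restrict_smul, integral_smul_nnreal_measure, NNReal.smul_def, smul_eq_mul,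
    ← mul_assoc]
  have hnorm : ((‖r‖₊⁻¹ ^ d : ℝ≥0) : ℝ) = (r ^ d)⁻¹ := by
    simp [NNReal.coe_rpow, abs_of_pos hr, Real.inv_rpow hr.le]
  rw [hnorm, mul_inv_cancel₀ (Real.rpow_pos_of_pos hr d).ne', one_mul]

section PlaneReflection

variable {m : ℕ} {i j : Fin m} {c s : ℝ}

noncomputable def planeReflection (hij : i ≠ j) (hcs : c ^ 2 + s ^ 2 = 1) :
    EuclideanSpace ℝ (Fin m) ≃ₗᵢ[ℝ] EuclideanSpace ℝ (Fin m) :=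
  LinearIsometry.toLinearIsometryEquiv
    { toFun := fun x => WithLp.toLp 2 fun a =>
        if a = i then c * x i + s * x j else if a = j then s * x i - c * x j else x a
      map_add' := fun x y => by
        ext a; simp only [PiLp.add_apply]; split_ifs <;> ring
      map_smul' := fun t x => by
        ext a; simp only [PiLp.smul_apply, smul_eq_mul, RingHom.id_apply]; split_ifs <;> ring
      norm_map' := fun x => by
        have hji : j ∈ Finset.univ.erase i :=
          Finset.mem_erase.mpr ⟨hij.symm, Finset.mem_univ j⟩
        rw [EuclideanSpace.norm_eq, EuclideanSpace.norm_eq,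
          ← Finset.add_sum_erase _ _ (Finset.mem_univ i), ← Finset.add_sum_erase _ _ hji,
          ← Finset.add_sum_erase _ _ (Finset.mem_univ i), ← Finset.add_sum_erase _ _ hji,
          ← add_assoc, ← add_assoc]
        congr 2
        · simp only [LinearMap.coe_mk, AddHom.coe_mk, if_pos, if_neg hij.symm,
            Real.norm_eq_abs, sq_abs]
          linear_combination (x i ^ 2 + x j ^ 2) * hcs
        · refine Finset.sum_congr rfl fun a ha => ?_
          obtain ⟨haj, hai⟩ : a ≠ j ∧ a ≠ i := by simpa using ha
          simp [hai, haj] }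
    rfl

variable (hij : i ≠ j) (hcs : c ^ 2 + s ^ 2 = 1) (x : EuclideanSpace ℝ (Fin m))

theorem planeReflection_apply_left : planeReflection hij hcs x i = c * x i + s * x j := by
  simp [planeReflection]

theorem planeReflection_apply_right : planeReflection hij hcs x j = s * x i - c * x j := by
  simp [planeReflection, hij.symm]

theorem planeReflection_apply_of_ne {a : Fin m} (hai : a ≠ i) (haj : a ≠ j) :
    planeReflection hij hcs x a = x a := by
  simp [planeReflection, hai, haj]

end PlaneReflection

structure IsIsotropicSphereMeasure {m : ℕ} (μ : Measure (EuclideanSpace ℝ (Fin m))) : Prop where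
  isFiniteMeasure : IsFiniteMeasure μ
  measurePreserving (g : EuclideanSpace ℝ (Fin m) ≃ₗᵢ[ℝ] EuclideanSpace ℝ (Fin m)) :
    MeasurePreserving g μ μ
  ae_norm_eq_one : ∀ᵐ y ∂μ, ‖y‖ = 1

theorem isIsotropicSphereMeasure_restrict_hausdorffMeasure {m : ℕ} {d : ℝ}
    (h : μH[d] (sphere (0 : EuclideanSpace ℝ (Fin m)) 1) < ∞) :
    IsIsotropicSphereMeasure (μH[d].restrict (sphere (0 : EuclideanSpace ℝ (Fin m)) 1)) where
  isFiniteMeasure := ⟨by rwa [Measure.restrict_apply_univ]⟩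
  measurePreserving g := by
    simpa [g.preimage_sphere] using
      (g.toIsometryEquiv.measurePreserving_hausdorffMeasure d).restrict_preimage
        (s := sphere 0 1) isClosed_sphere.measurableSet
  ae_norm_eq_one :=
    (ae_restrict_mem isClosed_sphere.measurableSet).mono fun y hy => by simpa using hy

namespace IsIsotropicSphereMeasure

variable {m : ℕ} {μ : Measure (EuclideanSpace ℝ (Fin m))}

theorem integrable_of_continuous (hμ : IsIsotropicSphereMeasure μ)
    {f : EuclideanSpace ℝ (Fin m) → ℝ} (hf : Continuous f) : Integrable f μ := by
  have := hμ.isFiniteMeasure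
  obtain ⟨C, hC⟩ := (isCompact_sphere (0 : EuclideanSpace ℝ (Fin m)) 1).exists_bound_of_continuousOn
    hf.continuousOn
  refine (integrable_const C).mono' hf.aestronglyMeasurable ?_
  filter_upwards [hμ.ae_norm_eq_one] with y hy using hC y (by simpa using hy)

theorem integral_comp (hμ : IsIsotropicSphereMeasure μ)
    (g : EuclideanSpace ℝ (Fin m) ≃ₗᵢ[ℝ] EuclideanSpace ℝ (Fin m))
    (f : EuclideanSpace ℝ (Fin m) → ℝ) : ∫ y, f (g y) ∂μ = ∫ y, f y ∂μ :=
  (hμ.measurePreserving g).integral_comp g.toHomeomorph.measurableEmbedding f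

theorem integral_mul_mul_mul_eq_zero (hμ : IsIsotropicSphereMeasure μ) {i j k l : Fin m}
    (hij : i ≠ j) (hik : i ≠ k) (hil : i ≠ l) : ∫ y, y i * y j * y k * y l ∂μ = 0 := by
  set g := planeReflection hij (c := -1) (s := 0) (by norm_num)
  have hg (y : EuclideanSpace ℝ (Fin m)) (a : Fin m) (ha : i ≠ a) : g y a = y a := by
    obtain rfl | haj := eq_or_ne a j
    · simp [g, planeReflection_apply_right]
    · exact planeReflection_apply_of_ne _ _ _ ha.symm haj
  have := hμ.integral_comp g fun y => y i * y j * y k * y l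
  simp only [hg _ _ hij, hg _ _ hik, hg _ _ hil, g, planeReflection_apply_left, neg_mul, one_mul,
    zero_mul, add_zero, integral_neg] at this
  linarith

theorem integral_comp_apply_eq (hμ : IsIsotropicSphereMeasure μ) (f : ℝ → ℝ) (i j : Fin m) :
    ∫ y, f (y i) ∂μ = ∫ y, f (y j) ∂μ := by
  obtain rfl | hij := eq_or_ne i j
  · rfl
  have := hμ.integral_comp (planeReflection hij (c := 0) (s := 1) (by norm_num)) fun y => f (y i)
  simpa [planeReflection_apply_left] using this.symm

theorem natCast_mul_integral_sq (hμ : IsIsotropicSphereMeasure μ) (i : Fin m) :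
    m * ∫ y, y i ^ 2 ∂μ = μ.real Set.univ := by
  have := hμ.isFiniteMeasure
  calc m * ∫ y, y i ^ 2 ∂μ = ∑ k, ∫ y, y k ^ 2 ∂μ := by
        simp [hμ.integral_comp_apply_eq (· ^ 2) _ i]
    _ = ∫ y, ‖y‖ ^ 2 ∂μ := by
        rw [← integral_finsetSum _ fun k _ => hμ.integrable_of_continuous (by fun_prop)]
        simp_rw [EuclideanSpace.real_norm_sq_eq]
    _ = μ.real Set.univ := by
        rw [integral_congr_ae (g := fun _ => 1) (hμ.ae_norm_eq_one.mono fun y hy => by simp [hy]),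
          integral_const, smul_eq_mul, mul_one]

/-- With `c = 3/5`, `s = 4/5`, the reflection sends `y i` to `(3 y i + 4 y j) / 5`; in the expansion
of its fourth power the odd terms integrate to `0` and `∫ y j ^ 4 = ∫ y i ^ 4`, which leaves
`288 ∫ y i ^ 4 = 864 ∫ y i ^ 2 * y j ^ 2`. -/
theorem integral_pow_four_eq_three_mul (hμ : IsIsotropicSphereMeasure μ) {i j : Fin m}
    (hij : i ≠ j) : ∫ y, y i ^ 4 ∂μ = 3 * ∫ y, y i ^ 2 * y j ^ 2 ∂μ := by
  have hrot := hμ.integral_comp (planeReflection hij (c := 3 / 5) (s := 4 / 5) (by norm_num))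
    fun y => y i ^ 4
  have hexpand (y : EuclideanSpace ℝ (Fin m)) : (3 / 5 * y i + 4 / 5 * y j) ^ 4 =
      81 / 625 * y i ^ 4 + 432 / 625 * (y j * y i * y i * y i) + 864 / 625 * (y i ^ 2 * y j ^ 2)
        + 768 / 625 * (y i * y j * y j * y j) + 256 / 625 * y j ^ 4 := by ring
  simp only [planeReflection_apply_left, hexpand] at hrot
  rw [integral_add, integral_add, integral_add, integral_add] at hrot
  · simp only [integral_const_mul, hμ.integral_comp_apply_eq (· ^ 4) j i,
      hμ.integral_mul_mul_mul_eq_zero hij.symm hij.symm hij.symm,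
      hμ.integral_mul_mul_mul_eq_zero hij hij hij] at hrot
    linarith
  all_goals exact hμ.integrable_of_continuous (by fun_prop)

theorem integral_pow_four (hμ : IsIsotropicSphereMeasure μ) (i : Fin m) :
    ∫ y, y i ^ 4 ∂μ = 3 * (μ.real Set.univ / ((m + 2) * m)) := by
  set A := ∫ y, y i ^ 4 ∂μ with hA
  have hterm (k : Fin m) :
      ∫ y, y i ^ 2 * y k ^ 2 ∂μ = A / 3 + if i = k then 2 * A / 3 else 0 := by
    obtain rfl | hik := eq_or_ne i k
    · simp only [if_pos, ← pow_add, A]; ring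
    · rw [if_neg hik, hA, hμ.integral_pow_four_eq_three_mul hik]; ring
  have hsum : ∑ k, ∫ y, y i ^ 2 * y k ^ 2 ∂μ = ∫ y, y i ^ 2 ∂μ := by
    rw [← integral_finsetSum _ fun k _ => hμ.integrable_of_continuous (by fun_prop)]
    refine integral_congr_ae (hμ.ae_norm_eq_one.mono fun y hy => ?_)
    dsimp only
    rw [← Finset.mul_sum, ← EuclideanSpace.real_norm_sq_eq, hy, one_pow, mul_one]
  simp only [hterm, Finset.sum_add_distrib, Finset.sum_ite_eq, Finset.mem_univ, if_true,
    Finset.sum_const, Finset.card_univ, Fintype.card_fin, nsmul_eq_mul] at hsum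
  have hm : (m : ℝ) ≠ 0 := Nat.cast_ne_zero.mpr i.pos.ne'
  rw [← hμ.natCast_mul_integral_sq i, ← hsum]
  field_simp

theorem integral_sq_mul_sq (hμ : IsIsotropicSphereMeasure μ) {i j : Fin m} (hij : i ≠ j) :
    ∫ y, y i ^ 2 * y j ^ 2 ∂μ = μ.real Set.univ / ((m + 2) * m) := by
  have := hμ.integral_pow_four_eq_three_mul hij
  rw [hμ.integral_pow_four] at this
  linarith

theorem integral_mul_mul_mul (hμ : IsIsotropicSphereMeasure μ) (i j k l : Fin m) :
    ∫ y, y i * y j * y k * y l ∂μ = μ.real Set.univ / ((m + 2) * m) *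
      ((if i = j then 1 else 0) * (if k = l then 1 else 0) +
        (if i = k then 1 else 0) * (if j = l then 1 else 0) +
        (if i = l then 1 else 0) * (if j = k then 1 else 0)) := by
  have hcongr {g : EuclideanSpace ℝ (Fin m) → ℝ} (h : ∀ y, y i * y j * y k * y l = g y) :
      ∫ y, y i * y j * y k * y l ∂μ = ∫ y, g y ∂μ :=
    integral_congr_ae (ae_of_all _ h)
  rcases eq_or_ne i j with rfl | hij
  · rcases eq_or_ne k l with rfl | hkl
    · rcases eq_or_ne i k with rfl | hik
      · rw [hcongr (g := fun y => y i ^ 4) fun y => by ring, hμ.integral_pow_four]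
        simp; ring
      · rw [hcongr (g := fun y => y i ^ 2 * y k ^ 2) fun y => by ring,
          hμ.integral_sq_mul_sq hik]
        simp [hik]
    · rcases eq_or_ne k i with rfl | hki
      · rw [hcongr (g := fun y => y l * y k * y k * y k) fun y => by ring,
          hμ.integral_mul_mul_mul_eq_zero hkl.symm hkl.symm hkl.symm]
        simp [hkl]
      · rw [hcongr (g := fun y => y k * y i * y i * y l) fun y => by ring,
          hμ.integral_mul_mul_mul_eq_zero hki hki hkl]
        simp [hkl, hki.symm]
  · rcases eq_or_ne i k with rfl | hik
    · rcases eq_or_ne j l with rfl | hjl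
      · rw [hcongr (g := fun y => y i ^ 2 * y j ^ 2) fun y => by ring,
          hμ.integral_sq_mul_sq hij]
        simp [hij, hij.symm]
      · rw [hcongr (g := fun y => y j * y i * y i * y l) fun y => by ring,
          hμ.integral_mul_mul_mul_eq_zero hij.symm hij.symm hjl]
        simp [hij, hij.symm, hjl]
    · rcases eq_or_ne i l with rfl | hil
      · rcases eq_or_ne j k with rfl | hjk
        · rw [hcongr (g := fun y => y i ^ 2 * y j ^ 2) fun y => by ring,
            hμ.integral_sq_mul_sq hij]
          simp [hij, hij.symm]
        · rw [hcongr (g := fun y => y j * y i * y k * y i) fun y => by ring,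
            hμ.integral_mul_mul_mul_eq_zero hij.symm hjk hij.symm]
          simp [hij, hik, hjk]
      · rw [hμ.integral_mul_mul_mul_eq_zero hij hik hil]
        simp [hij, hik, hil]

theorem integral_sum_mul_mul_mul (hμ : IsIsotropicSphereMeasure μ) (T : Fin m → Fin m → ℝ)
    (hsymm : ∀ i j, T i j = T j i) (htr : ∑ i, T i i = 0) :
    ∫ y, ∑ i, ∑ j, ∑ k, ∑ l, T i j * T k l * y i * y j * y k * y l ∂μ =
      2 * μ.real Set.univ / ((m + 2) * m) * ∑ i, ∑ j, T i j ^ 2 := by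
  have hterm (i j k l : Fin m) : ∫ y, T i j * T k l * y i * y j * y k * y l ∂μ =
      T i j * T k l * ∫ y, y i * y j * y k * y l ∂μ := by
    rw [← integral_const_mul]; congr 1; ext y; ring
  simp (disch := intro _ _; exact hμ.integrable_of_continuous (by fun_prop)) only
    [integral_finsetSum]
  simp only [hterm, hμ.integral_mul_mul_mul, mul_add, Finset.sum_add_distrib, mul_ite, mul_one,
    mul_zero, Finset.sum_ite_irrel, Finset.sum_const_zero, Finset.sum_ite_eq, Finset.mem_univ,
    if_true]
  have hT (i j : Fin m) : T i j * T j i = T i j ^ 2 := by rw [← hsymm, sq]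
  simp only [← Finset.sum_mul, ← Finset.mul_sum, htr, hT, ← sq]
  ring

end IsIsotropicSphereMeasure

theorem stmt9_general (m : ℕ) (r : ℝ) (hr : 0 < r)
    (T : Fin m → Fin m → ℝ)
    (hsymm : ∀ i j, T i j = T j i) (htr : ∑ i, T i i = 0)
    (σ : ℝ)
    (hσ : σ = (μH[(m - 1 : ℝ)] (Metric.sphere (0 : EuclideanSpace ℝ (Fin m)) 1)).toReal) :
    ∫ y in Metric.sphere (0 : EuclideanSpace ℝ (Fin m)) r,
        (∑ i, ∑ j, ∑ k, ∑ l, T i j * T k l * y i * y j * y k * y l) ∂μH[(m - 1 : ℝ)] =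
      (2 * σ / (((m : ℝ) + 2) * m)) * r ^ (m + 3) * ∑ i, ∑ j, (T i j) ^ 2 := by
  obtain _ | n := m
  · simp
  have hd : ((n + 1 : ℕ) : ℝ) - 1 = n := by push_cast; ring
  have hμ := isIsotropicSphereMeasure_restrict_hausdorffMeasure (hausdorffMeasure_sphere_lt_top n)
  have hhom (y : EuclideanSpace ℝ (Fin (n + 1))) :
      ∑ i, ∑ j, ∑ k, ∑ l, T i j * T k l * (r • y) i * (r • y) j * (r • y) k * (r • y) l =
        r ^ 4 * ∑ i, ∑ j, ∑ k, ∑ l, T i j * T k l * y i * y j * y k * y l := by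
    simp only [PiLp.smul_apply, smul_eq_mul, Finset.mul_sum]
    exact Finset.sum_congr rfl fun i _ => Finset.sum_congr rfl fun j _ =>
      Finset.sum_congr rfl fun k _ => Finset.sum_congr rfl fun l _ => by ring
  rw [hd] at hσ ⊢
  rw [setIntegral_sphere_hausdorffMeasure n.cast_nonneg hr, funext hhom, integral_const_mul,
    hμ.integral_sum_mul_mul_mul T hsymm htr, Measure.real, Measure.restrict_apply_univ, ← hσ,
    Real.rpow_natCast]
  ring

theorem stmt9 (m : ℕ) (hm : 1 ≤ m) (r : ℝ) (hr : 0 < r)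
    (T : Fin m → Fin m → ℝ)
    (hsymm : ∀ i j, T i j = T j i) (htr : ∑ i, T i i = 0)
    (σ : ℝ)
    (hσ : σ = (μH[(m - 1 : ℝ)] (Metric.sphere (0 : EuclideanSpace ℝ (Fin m)) 1)).toReal) :
    ∫ y in Metric.sphere (0 : EuclideanSpace ℝ (Fin m)) r,
        (∑ i, ∑ j, ∑ k, ∑ l, T i j * T k l * y i * y j * y k * y l) ∂μH[(m - 1 : ℝ)] =
      (2 * σ / (((m : ℝ) + 2) * m)) * r ^ (m + 3) * ∑ i, ∑ j, (T i j) ^ 2 :=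
  stmt9_general m r hr T hsymm htr σ hσ
end

section
/- For n ≥ 3 and any ε > 0, ∫_{ℝⁿ₊} |∇U_ε|² dx = (n-2) ∫_{∂ℝⁿ₊} U_ε^{2(n-1)/(n-2)} dx̄, where U_ε(x) = (ε/(|x̄|²+(ε+x_n)²))^{(n-2)/2}. -/
/-!
Write `n = m + 1`, `e` for the last unit vector and `r x = ‖x + ε e‖²`, so that
`U_ε = (ε / r) ^ ((m - 1) / 2)`. Since `∇r = 2 (x + ε e)` has `|∇r|² = 4 r`, the energy density is
`|∇U_ε|² = (m - 1)² ε ^ (m - 1) r⁻ᵐ`. Integrating over the half space slice by slice, the slice at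
height `t` rescales to `(ε + t)⁻ᵐ C` with `C = ∫_{ℝᵐ} (|y|² + 1)⁻ᵐ dy`, and
`∫₀^∞ (ε + t)⁻ᵐ dt = ε ^ (1 - m) / (m - 1)`. The boundary integrand is `ε ^ m (|y|² + ε²)⁻ᵐ`,
whose integral rescales to `C` as well, so both sides equal `(m - 1) C`.
-/

open MeasureTheory Set Module Real

lemma hasDerivAt_div_rpow {c p r : ℝ} (hc : 0 < c) (hr : 0 < r) :
    HasDerivAt (fun s => (c / s) ^ p) (-p * (c / r) ^ p / r) r := by
  have h := ((hasDerivAt_inv hr.ne').const_mul c).rpow_const (p := p)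
    (by simpa [← div_eq_mul_inv] using Or.inl (div_pos hc hr).ne')
  simp only [← div_eq_mul_inv] at h
  convert h using 1
  rw [rpow_sub_one (div_pos hc hr).ne']
  field_simp

lemma hasFDerivAt_div_norm_add_sq_rpow {E : Type*} [NormedAddCommGroup E]
    [InnerProductSpace ℝ E] {c p : ℝ} (hc : 0 < c) {a x : E} (hx : x + a ≠ 0) :
    HasFDerivAt (fun y => (c / ‖y + a‖ ^ 2) ^ p)
      ((-2 * p * (c / ‖x + a‖ ^ 2) ^ p / ‖x + a‖ ^ 2) • innerSL ℝ (x + a)) x := by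
  have h := (hasDerivAt_div_rpow (p := p) hc (by positivity : 0 < ‖x + a‖ ^ 2)).comp_hasFDerivAt
    x ((hasFDerivAt_id x).add_const a).norm_sq
  refine h.congr_fderiv ?_
  ext v
  simp only [neg_mul, id_eq, map_add, ContinuousLinearMap.comp_id, smul_add, add_apply,
    smul_apply, coe_innerSL_apply, nsmul_eq_mul, Nat.cast_ofNat, smul_eq_mul]
  ring

lemma rpow_sub_one_div_two_sq {b : ℝ} (hb : 0 ≤ b) {m : ℕ} (hm : 1 ≤ m) :
    (b ^ (((m : ℝ) - 1) / 2)) ^ 2 = b ^ (m - 1) := by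
  rw [← rpow_natCast, ← rpow_mul hb, ← rpow_natCast, Nat.cast_sub hm]
  congr 1
  push_cast
  ring

lemma rpow_sub_two_div_two_rpow {b : ℝ} (hb : 0 ≤ b) {n : ℕ} (hn1 : 1 ≤ n) (hn2 : n ≠ 2) :
    (b ^ (((n : ℝ) - 2) / 2)) ^ (2 * ((n : ℝ) - 1) / ((n : ℝ) - 2)) = b ^ (n - 1) := by
  rw [← rpow_mul hb, ← rpow_natCast, Nat.cast_sub hn1]
  congr 1
  have : (n : ℝ) - 2 ≠ 0 := sub_ne_zero.2 (by exact_mod_cast hn2)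
  field_simp
  norm_num

section HaarMeasure

variable {E : Type*} [NormedAddCommGroup E] [InnerProductSpace ℝ E] [FiniteDimensional ℝ E]
  [MeasurableSpace E] [BorelSpace E] (μ : Measure E) [μ.IsAddHaarMeasure]

lemma integrable_inv_norm_sq_add_sq_pow {k : ℕ} (hk : finrank ℝ E < 2 * k) {c : ℝ}
    (hc : c ≠ 0) : Integrable (fun x => ((‖x‖ ^ 2 + c ^ 2) ^ k)⁻¹) μ := by
  have h := ((integrable_rpow_neg_one_add_norm_sq (μ := μ) (r := 2 * k)
    (by exact_mod_cast hk)).comp_smul (inv_ne_zero hc)).const_mul ((c ^ 2)⁻¹ ^ k)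
  refine h.congr (ae_of_all _ fun x => ?_)
  have hscale : (1 : ℝ) + ‖c⁻¹ • x‖ ^ 2 = (c ^ 2)⁻¹ * (‖x‖ ^ 2 + c ^ 2) := by
    rw [norm_smul, mul_pow, norm_inv, Real.norm_eq_abs, inv_pow, sq_abs]
    field_simp
    ring
  dsimp only
  rw [hscale, show -(2 * (k : ℝ)) / 2 = -(k : ℝ) by ring, rpow_neg (by positivity), rpow_natCast,
    mul_pow, mul_inv, ← mul_assoc, inv_pow, inv_inv, inv_mul_cancel₀ (by positivity), one_mul]

lemma integral_inv_norm_sq_add_sq_pow (k : ℕ) {c : ℝ} (hc : 0 < c) :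
    ∫ x, ((‖x‖ ^ 2 + c ^ 2) ^ k)⁻¹ ∂μ =
      c ^ finrank ℝ E / c ^ (2 * k) * ∫ x, ((‖x‖ ^ 2 + 1) ^ k)⁻¹ ∂μ := by
  have h := Measure.integral_comp_smul μ (fun x : E => ((‖x‖ ^ 2 + c ^ 2) ^ k)⁻¹) c
  have hscale : ∀ x : E,
      ((‖c • x‖ ^ 2 + c ^ 2) ^ k)⁻¹ = (c ^ (2 * k))⁻¹ * ((‖x‖ ^ 2 + 1) ^ k)⁻¹ := by
    intro x
    rw [norm_smul, norm_of_nonneg hc.le, pow_mul, ← mul_inv, ← mul_pow]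
    ring
  simp only [hscale, integral_const_mul, smul_eq_mul, abs_of_pos (inv_pos.2 (pow_pos hc _))] at h
  field_simp at h ⊢
  linarith

end HaarMeasure

lemma integral_Ici_inv_add_pow {ε : ℝ} (hε : 0 < ε) {m : ℕ} (hm : 1 < m) :
    ∫ t in Ici (0 : ℝ), ((ε + t) ^ m)⁻¹ = (((m : ℝ) - 1) * ε ^ (m - 1))⁻¹ := by
  have hshift := (measurePreserving_add_left volume ε).setIntegral_preimage_emb
    (measurableEmbedding_addLeft ε) (fun s : ℝ => s ^ (-(m : ℝ))) (Ioi ε)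
  have hpre : (fun t : ℝ => ε + t) ⁻¹' Ioi ε = Ioi 0 := by ext t; simp
  rw [hpre, integral_Ioi_rpow_of_lt (by norm_cast; omega) hε] at hshift
  rw [integral_Ici_eq_integral_Ioi, setIntegral_congr_fun measurableSet_Ioi
    (g := fun t => (ε + t) ^ (-(m : ℝ)))
    (fun t (ht : 0 < t) => by dsimp only; rw [rpow_neg (by linarith), rpow_natCast]), hshift,
    show -(m : ℝ) + 1 = -((m - 1 : ℕ) : ℝ) by push_cast [Nat.cast_sub hm.le]; ring,
    rpow_neg hε.le, rpow_natCast, Nat.cast_sub hm.le]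
  push_cast
  field_simp

namespace EuclideanSpace

section Gradient

variable {ι : Type*} [Fintype ι] [DecidableEq ι]

lemma sum_inner_single_sq (w : EuclideanSpace ℝ ι) :
    ∑ i, inner ℝ w (single i (1 : ℝ)) ^ 2 = ‖w‖ ^ 2 := by
  simp [inner_single_right, real_norm_sq_eq]

lemma sum_fderiv_div_norm_add_sq_rpow_sq {c p : ℝ} (hc : 0 < c) {a x : EuclideanSpace ℝ ι}
    (hx : x + a ≠ 0) :
    ∑ i, fderiv ℝ (fun y => (c / ‖y + a‖ ^ 2) ^ p) x (single i 1) ^ 2 =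
      4 * p ^ 2 * ((c / ‖x + a‖ ^ 2) ^ p) ^ 2 / ‖x + a‖ ^ 2 := by
  simp only [(hasFDerivAt_div_norm_add_sq_rpow hc hx).fderiv, smul_apply, innerSL_apply_apply,
    smul_eq_mul, mul_pow, ← Finset.mul_sum, sum_inner_single_sq]
  have : ‖x + a‖ ≠ 0 := norm_ne_zero_iff.2 hx
  field_simp
  ring

lemma sum_fderiv_bubble_sq {c : ℝ} (hc : 0 < c) {m : ℕ} (hm : 1 ≤ m)
    {a x : EuclideanSpace ℝ ι} (hx : x + a ≠ 0) :
    ∑ i, fderiv ℝ (fun y => (c / ‖y + a‖ ^ 2) ^ (((m : ℝ) - 1) / 2)) x (single i 1) ^ 2 =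
      ((m : ℝ) - 1) ^ 2 * c ^ (m - 1) * ((‖x + a‖ ^ 2) ^ m)⁻¹ := by
  rw [sum_fderiv_div_norm_add_sq_rpow_sq hc hx, rpow_sub_one_div_two_sq (by positivity) hm]
  have hr : ‖x + a‖ ^ 2 ≠ 0 := by simpa using hx
  generalize ‖x + a‖ ^ 2 = r at *
  obtain ⟨k, rfl⟩ : ∃ k, m = k + 1 := ⟨m - 1, by omega⟩
  rw [Nat.add_sub_cancel, div_pow c r]
  field_simp
  push_cast
  ring

lemma norm_sq_add_sq_le_norm_add_smul_single_sq {x : EuclideanSpace ℝ ι} {i : ι} (hx : 0 ≤ x i)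
    {ε : ℝ} (hε : 0 ≤ ε) : ‖x‖ ^ 2 + ε ^ 2 ≤ ‖x + ε • single i 1‖ ^ 2 := by
  rw [norm_add_sq_real, inner_smul_right, inner_single_right, norm_smul, PiLp.norm_single]
  simp
  positivity

lemma add_smul_single_ne_zero {x : EuclideanSpace ℝ ι} {i : ι} (hx : 0 ≤ x i) {ε : ℝ}
    (hε : 0 < ε) : x + ε • single i 1 ≠ 0 := by
  intro h
  have := norm_sq_add_sq_le_norm_add_smul_single_sq hx hε.le
  rw [h, norm_zero] at this
  nlinarith [sq_nonneg ‖x‖]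

end Gradient

section HalfSpace

variable {m : ℕ}

def splitLast (m : ℕ) : EuclideanSpace ℝ (Fin (m + 1)) ≃ᵐ ℝ × EuclideanSpace ℝ (Fin m) :=
  (MeasurableEquiv.toLp 2 _).symm.trans <|
    (MeasurableEquiv.piFinSuccAbove (fun _ => ℝ) (Fin.last m)).trans <|
      MeasurableEquiv.prodCongr (MeasurableEquiv.refl ℝ) (MeasurableEquiv.toLp 2 _)

@[simp]
lemma splitLast_fst (x : EuclideanSpace ℝ (Fin (m + 1))) : (splitLast m x).1 = x (Fin.last m) :=
  rfl

@[simp]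
lemma splitLast_snd (x : EuclideanSpace ℝ (Fin (m + 1))) (i : Fin m) :
    (splitLast m x).2 i = x i.castSucc := by
  simp only [splitLast, MeasurableEquiv.trans_apply, MeasurableEquiv.toLp_symm_apply,
    MeasurableEquiv.piFinSuccAbove_apply, Fin.insertNthEquiv_last, Fin.snocEquiv_symm_apply]
  rfl

lemma measurePreserving_splitLast : MeasurePreserving (splitLast m) :=
  (PiLp.volume_preserving_ofLp _).trans <|
    (volume_preserving_piFinSuccAbove (fun _ => ℝ) (Fin.last m)).trans <|
      (MeasurePreserving.id volume).prod (PiLp.volume_preserving_toLp _)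

lemma norm_add_smul_single_last_sq (x : EuclideanSpace ℝ (Fin (m + 1))) (ε : ℝ) :
    ‖x + ε • single (Fin.last m) 1‖ ^ 2 =
      ‖(splitLast m x).2‖ ^ 2 + (ε + x (Fin.last m)) ^ 2 := by
  simp [real_norm_sq_eq, Fin.sum_univ_castSucc, (Fin.castSucc_lt_last _).ne]
  ring

lemma integrableOn_halfSpace_inv_norm_add_smul_single_sq_pow (hm : 2 ≤ m) {ε : ℝ} (hε : 0 < ε) :
    IntegrableOn (fun x => ((‖x + ε • single (Fin.last m) 1‖ ^ 2) ^ m)⁻¹)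
      {x : EuclideanSpace ℝ (Fin (m + 1)) | 0 ≤ x (Fin.last m)} := by
  refine ((integrable_inv_norm_sq_add_sq_pow volume (k := m) (by simp; omega)
    hε.ne').integrableOn).mono' (by fun_prop) ?_
  refine ae_restrict_of_forall_mem (measurableSet_le measurable_const (by fun_prop))
    fun x hx => ?_
  rw [norm_inv, norm_pow, norm_of_nonneg (sq_nonneg _)]
  exact inv_anti₀ (by positivity)
    (pow_le_pow_left₀ (by positivity) (norm_sq_add_sq_le_norm_add_smul_single_sq hx hε.le) m)

lemma setIntegral_halfSpace_inv_norm_add_smul_single_sq_pow (hm : 2 ≤ m) {ε : ℝ} (hε : 0 < ε) :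
    ∫ x in {x : EuclideanSpace ℝ (Fin (m + 1)) | 0 ≤ x (Fin.last m)},
        ((‖x + ε • single (Fin.last m) 1‖ ^ 2) ^ m)⁻¹ =
      ε / ((m : ℝ) - 1) * ∫ y : EuclideanSpace ℝ (Fin m), ((‖y‖ ^ 2 + ε ^ 2) ^ m)⁻¹ := by
  set F : ℝ × EuclideanSpace ℝ (Fin m) → ℝ := fun z => ((‖z.2‖ ^ 2 + (ε + z.1) ^ 2) ^ m)⁻¹
  have hF : (fun x => ((‖x + ε • single (Fin.last m) 1‖ ^ 2) ^ m)⁻¹) = F ∘ splitLast m := by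
    funext x
    simp only [Function.comp, F, norm_add_smul_single_last_sq, splitLast_fst]
  have hH : splitLast m ⁻¹' (Ici 0 ×ˢ univ) = {x | 0 ≤ x (Fin.last m)} := by
    ext x
    simp
  have hFint : IntegrableOn F (Ici 0 ×ˢ univ) := by
    rw [← measurePreserving_splitLast.integrableOn_comp_preimage
      (splitLast m).measurableEmbedding, ← hF, hH]
    exact integrableOn_halfSpace_inv_norm_add_smul_single_sq_pow hm hε
  have hslice : ∀ t ∈ Ici (0 : ℝ), ∫ y, F (t, y) =
      ((ε + t) ^ m)⁻¹ * ∫ y : EuclideanSpace ℝ (Fin m), ((‖y‖ ^ 2 + 1) ^ m)⁻¹ := by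
    intro t ht
    have ht' : 0 < ε + t := by simp only [mem_Ici] at ht; linarith
    show ∫ y : EuclideanSpace ℝ (Fin m), ((‖y‖ ^ 2 + (ε + t) ^ 2) ^ m)⁻¹ = _
    rw [integral_inv_norm_sq_add_sq_pow volume m ht', finrank_euclideanSpace_fin]
    field_simp
    ring
  have hchange := measurePreserving_splitLast.setIntegral_preimage_emb
    (splitLast m).measurableEmbedding F (Ici 0 ×ˢ univ)
  rw [hH] at hchange
  rw [hF, Function.comp_def, hchange, Measure.volume_eq_prod, setIntegral_prod _ hFint,
    Measure.restrict_univ, setIntegral_congr_fun measurableSet_Ici hslice, integral_mul_const,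
    integral_Ici_inv_add_pow hε (by omega), integral_inv_norm_sq_add_sq_pow volume m hε,
    finrank_euclideanSpace_fin]
  obtain ⟨k, rfl⟩ : ∃ k, m = k + 1 := ⟨m - 1, by omega⟩
  have hk : (k : ℝ) ≠ 0 := by norm_cast; omega
  field_simp
  push_cast
  ring

end HalfSpace

end EuclideanSpace

theorem stmt13 (n : ℕ) (hn : 3 ≤ n) (ε : ℝ) (hε : 0 < ε)
    (U : EuclideanSpace ℝ (Fin n) → ℝ)
    (hU : ∀ x : EuclideanSpace ℝ (Fin n),
      U x = (ε / (∑ i : Fin (n - 1), (x (Fin.castLE (by omega) i)) ^ 2 +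
          (ε + x ⟨n - 1, by omega⟩) ^ 2)) ^ (((n : ℝ) - 2) / 2)) :
    ∫ x in {x : EuclideanSpace ℝ (Fin n) | 0 ≤ x ⟨n - 1, by omega⟩},
        ∑ i : Fin n, (fderiv ℝ U x (EuclideanSpace.single i 1)) ^ 2 =
      ((n : ℝ) - 2) * ∫ y : EuclideanSpace ℝ (Fin (n - 1)),
        ((ε / (∑ i : Fin (n - 1), (y i) ^ 2 + ε ^ 2)) ^ (((n : ℝ) - 2) / 2)) ^
          ((2 * ((n : ℝ) - 1)) / ((n : ℝ) - 2)) := by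
  obtain ⟨m, rfl⟩ : ∃ m, n = m + 1 := ⟨n - 1, by omega⟩
  have hm : 2 ≤ m := by omega
  set a : EuclideanSpace ℝ (Fin (m + 1)) := ε • EuclideanSpace.single (Fin.last m) 1
  have hU' : U = fun y => (ε / ‖y + a‖ ^ 2) ^ (((m : ℝ) - 1) / 2) := by
    funext y
    rw [hU, EuclideanSpace.norm_add_smul_single_last_sq, EuclideanSpace.real_norm_sq_eq]
    simp only [EuclideanSpace.splitLast_snd]
    congr 2
    push_cast
    ring
  have hgrad : EqOn (fun x => ∑ i, fderiv ℝ U x (EuclideanSpace.single i 1) ^ 2)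
      (fun x => ((m : ℝ) - 1) ^ 2 * ε ^ (m - 1) * ((‖x + a‖ ^ 2) ^ m)⁻¹)
      {x | 0 ≤ x (Fin.last m)} := fun x hx => by
    rw [hU']
    exact EuclideanSpace.sum_fderiv_bubble_sq hε (by omega)
      (EuclideanSpace.add_smul_single_ne_zero hx hε)
  have hbdry : ∀ y : EuclideanSpace ℝ (Fin m),
      ((ε / (∑ i, y i ^ 2 + ε ^ 2)) ^ ((((m + 1 : ℕ) : ℝ) - 2) / 2)) ^
          ((2 * (((m + 1 : ℕ) : ℝ) - 1)) / (((m + 1 : ℕ) : ℝ) - 2)) =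
        ε ^ m * ((‖y‖ ^ 2 + ε ^ 2) ^ m)⁻¹ := fun y => by
    rw [rpow_sub_two_div_two_rpow (by positivity) (by omega) (by omega), Nat.add_sub_cancel,
      ← EuclideanSpace.real_norm_sq_eq, div_pow, div_eq_mul_inv]
  simp only [Nat.add_sub_cancel]
  rw [show (⟨m, by omega⟩ : Fin (m + 1)) = Fin.last m from rfl,
    setIntegral_congr_fun (measurableSet_le measurable_const (by fun_prop)) hgrad,
    integral_const_mul, EuclideanSpace.setIntegral_halfSpace_inv_norm_add_smul_single_sq_pow hm hε]
  -- the boundary variable still lives in `Fin (m + 1 - 1)`, which is `Fin m` only up to defeq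
  erw [integral_congr_ae (ae_of_all _ hbdry)]
  rw [integral_const_mul, ← pow_sub_one_mul (by omega : m ≠ 0) ε]
  have : (m : ℝ) - 1 ≠ 0 := sub_ne_zero.2 (by exact_mod_cast (by omega : m ≠ 1))
  field_simp
  push_cast
  ring
end
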